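/- Under the proper-ranking assumption with predictions restricted to fixed sizes K̂ᵢ, any prediction's Micro-F1 satisfies Micro-F1(P) ≤ (2 Σᵢ min(K̂ᵢ,Kᵢ))/(Σᵢ(Kᵢ+K̂ᵢ)), and the top-K̂ᵢ prediction achieves this bound; hence the gap between the achieved Micro-F1 under K̂ᵢ = Kᵢ and under any other fixed K̂ᵢ is nonnegative. -/
import Mathlib


/-- Under the proper-ranking assumption with fixed prediction sizes K̂ᵢ:
(a) any prediction's Micro-F1 is at most (2 Σ min(K̂ᵢ,Kᵢ))/(Σ (Kᵢ+K̂ᵢ));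
(b) the top-K̂ᵢ prediction attains this bound;
(c) the optimal Micro-F1 with K̂ᵢ = Kᵢ (namely 1) is ≥ the bound for any sizes. -/
theorem microF1_bound_attained {L : Type*} [Fintype L] [DecidableEq L]
    (l : ℕ) (hl : 0 < l) (d : Fin l → L → ℝ) (hinj : ∀ i, Function.Injective (d i))
    (T : Fin l → Finset L) (hT : ∀ i, 1 ≤ (T i).card) (Khat : Fin l → ℕ)
    (hrank : ∀ i, ∀ t ∈ T i, ∀ s ∉ T i, d i t > d i s)
    (P : Fin l → Finset L) (hPcard : ∀ i, (P i).card = Khat i)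
    (htop : ∀ i, ∀ a ∈ P i, ∀ b ∉ P i, d i a > d i b) :
    (∀ Q : Fin l → Finset L, (∀ i, (Q i).card = Khat i) →
       ((2 * ∑ i, (Q i ∩ T i).card : ℕ) : ℚ) / ((∑ i, ((T i).card + Khat i) : ℕ) : ℚ)
         ≤ ((2 * ∑ i, min (Khat i) (T i).card : ℕ) : ℚ)
             / ((∑ i, ((T i).card + Khat i) : ℕ) : ℚ))
    ∧ ((2 * ∑ i, (P i ∩ T i).card : ℕ) : ℚ) / ((∑ i, ((T i).card + Khat i) : ℕ) : ℚ)
        = ((2 * ∑ i, min (Khat i) (T i).card : ℕ) : ℚ)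
            / ((∑ i, ((T i).card + Khat i) : ℕ) : ℚ)
    ∧ ((2 * ∑ i, min (Khat i) (T i).card : ℕ) : ℚ)
        / ((∑ i, ((T i).card + Khat i) : ℕ) : ℚ) ≤ 1 := by
  -- key: P attains the min in each coordinate
  have hP : ∀ i, (P i ∩ T i).card = min (Khat i) (T i).card := by
    intro i
    rcases le_or_gt (Khat i) ((T i).card) with h | h
    · -- P i ⊆ T i
      have hsub : P i ⊆ T i := by
        intro a ha
        by_contra haT
        have hpc := hPcard i
        have hlt : (P i ∩ T i).card < (T i).card := by
          have : (P i ∩ T i).card < (P i).card := by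
            apply Finset.card_lt_card
            constructor
            · exact Finset.inter_subset_left
            · intro hsub
              exact haT (Finset.mem_inter.mp (hsub ha)).2
          omega
        obtain ⟨t, htT, htP⟩ : ∃ t ∈ T i, t ∉ P i := by
          by_contra hc
          push_neg at hc
          have := Finset.card_le_card (fun x hx =>
            Finset.mem_inter.mpr ⟨hc x hx, hx⟩ : T i ⊆ P i ∩ T i)
          omega
        have h1 := htop i a ha t htP
        have h2 := hrank i t htT a haT
        linarith
      rw [Finset.inter_eq_left.mpr hsub, hPcard, min_eq_left h]
    · -- T i ⊆ P i
      have hsub : T i ⊆ P i := by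
        intro t ht
        by_contra htP
        obtain ⟨s, hsP, hsT⟩ : ∃ s ∈ P i, s ∉ T i := by
          by_contra hc
          push_neg at hc
          have := Finset.card_le_card (hc : P i ⊆ T i)
          have := hPcard i
          omega
        have h1 := htop i s hsP t htP
        have h2 := hrank i t ht s hsT
        linarith
      rw [Finset.inter_eq_right.mpr hsub, min_eq_right (le_of_lt h)]
  have hden : (0:ℚ) < ((∑ i, ((T i).card + Khat i) : ℕ) : ℚ) := by
    have : 0 < ∑ i : Fin l, ((T i).card + Khat i) := by
      have : ∑ i : Fin l, 1 ≤ ∑ i : Fin l, ((T i).card + Khat i) :=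
        Finset.sum_le_sum (fun i _ => by have := hT i; omega)
      simp at this
      omega
    exact_mod_cast this
  refine ⟨?_, ?_, ?_⟩
  · intro Q hQ
    gcongr with i hi
    have h1 : (Q i ∩ T i).card ≤ (Q i).card := Finset.card_le_card Finset.inter_subset_left
    have h2 : (Q i ∩ T i).card ≤ (T i).card := Finset.card_le_card Finset.inter_subset_right
    rw [hQ i] at h1
    omega
  · congr 2
    exact_mod_cast congrArg (2 * ·) (Finset.sum_congr rfl fun i _ => hP i)
  · rw [div_le_one hden]
    have : 2 * ∑ i, min (Khat i) (T i).card ≤ ∑ i, ((T i).card + Khat i) := by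
      rw [Finset.mul_sum]
      apply Finset.sum_le_sum
      intro i _
      omega
    exact_mod_cast this
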